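/- Let Y be the symmetric simple random walk (steps ±1 with probability 1/2 each) and let V_k denote the first hitting time of level k. Then, with P_2 denoting the law of the walk started at Y_0 = 2, lim_{m→∞} P_2(V_1 < m | V_0 > m) = 1/2. -/

import Mathlib

open MeasureTheory ProbabilityTheory Filter Topology

namespace TASEP

/-- The step distribution of the random walk: `-1` with probability `p` and `+1` with
probability `1 - p`. -/
noncomputable def stepLaw (p : ℝ) : Measure ℤ :=
  ENNReal.ofReal p • Measure.dirac (-1) + ENNReal.ofReal (1 - p) • Measure.dirac 1

/-- The random walk started at `x` with increments `X 0, X 1, …`. -/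
def walkFrom {Ω : Type*} (x : ℤ) (X : ℕ → Ω → ℤ) (k : ℕ) (ω : Ω) : ℤ :=
  x + ∑ i ∈ Finset.range k, X i ω

/-- The first hitting time `V_lvl = min {k ≥ 0 : Y k = lvl} ∈ ℕ∞` of the level `lvl`
by the walk `Y` (equal to `∞` if the level is never visited). -/
noncomputable def hitTime {Ω : Type*} (Y : ℕ → Ω → ℤ) (lvl : ℤ) (ω : Ω) : ℕ∞ :=
  sInf ((fun k : ℕ => (k : ℕ∞)) '' {k : ℕ | Y k ω = lvl})

/-!
Almost surely every step is `±1`, so an event that is determined by the first `m` steps has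
probability `#patterns / 2 ^ m`, counted over the Boolean patterns of length `m`. A `±1` walk
from `2` with `V₀ > m` stays `≥ 1` up to time `m`; one with `V₁ ≥ m` stays `≥ 2` up to time
`m - 1`, and therefore also has `V₀ > m`. Hence
`P₂(V₁ < m, V₀ > m) = P₂(V₀ > m) - P₂(V₁ ≥ m)`.

The `±1` paths of length `n` from `x ≥ 0` that stay `≥ 0` are as many as those ending in
`[-x, x + 1]`: both counts obey the same recursion in `n`. For `x = 0` this gives the ballot-type
count `C(n, ⌈n/2⌉)`, and the conditional probability comes out as exactly `c / (2c + 1)` with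
`c = ⌊m/2⌋`.
-/

open Finset
open scoped ENNReal

def patStep {n : ℕ} (s : Fin n → Bool) (i : ℕ) : ℤ :=
  if h : i < n then (if s ⟨i, h⟩ then 1 else -1) else 0

def patSum {n : ℕ} (s : Fin n → Bool) (k : ℕ) : ℤ :=
  ∑ i ∈ range k, patStep s i

noncomputable def patCount (n : ℕ) (p : (Fin n → Bool) → Prop) : ℕ :=
  Nat.card {s // p s}

lemma patStep_cons_zero {n : ℕ} (b : Bool) (t : Fin n → Bool) :
    patStep (Fin.cons b t : Fin (n + 1) → Bool) 0 = if b then 1 else -1 := by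
  simp [patStep]

lemma patStep_cons_succ {n : ℕ} (b : Bool) (t : Fin n → Bool) (i : ℕ) :
    patStep (Fin.cons b t : Fin (n + 1) → Bool) (i + 1) = patStep t i := by
  unfold patStep
  by_cases h : i < n
  · rw [dif_pos (Nat.succ_lt_succ h), dif_pos h]
    rfl
  · rw [dif_neg (by omega), dif_neg h]

lemma forall_patStep_eq_iff {n : ℕ} {s t : Fin n → Bool} :
    (∀ i < n, patStep s i = patStep t i) ↔ s = t := by
  refine ⟨fun h => funext fun i => ?_, fun h _ _ => h ▸ rfl⟩
  have hi := h i i.isLt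
  simp only [patStep, i.isLt, dif_pos] at hi
  revert hi
  cases s i <;> cases t i <;> simp

lemma patSum_cons {n : ℕ} (b : Bool) (t : Fin n → Bool) (k : ℕ) :
    patSum (Fin.cons b t : Fin (n + 1) → Bool) (k + 1) = (if b then 1 else -1) + patSum t k := by
  rw [patSum, sum_range_succ', patStep_cons_zero, add_comm]
  simp only [patStep_cons_succ, patSum]

lemma patSum_eq_two_mul_card_sub {n : ℕ} (s : Fin n → Bool) :
    patSum s n = 2 * #{i | s i} - n := by
  have h : ∀ i : Fin n, patStep s i = 2 * (if s i then 1 else 0) - 1 := fun i => by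
    simp only [patStep, i.isLt, dif_pos]
    split_ifs <;> simp
  rw [patSum, ← Fin.sum_univ_eq_sum_range (patStep s), sum_congr rfl fun i _ => h i,
    sum_sub_distrib, ← mul_sum, sum_boole]
  simp

lemma patCount_congr {n : ℕ} {p q : (Fin n → Bool) → Prop} (h : ∀ s, p s ↔ q s) :
    patCount n p = patCount n q :=
  Nat.card_congr (Equiv.subtypeEquivRight h)

lemma patCount_of_forall {n : ℕ} {p : (Fin n → Bool) → Prop} (h : ∀ s, p s) :
    patCount n p = 2 ^ n := by
  rw [patCount, Nat.card_congr (Equiv.subtypeUnivEquiv h)]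
  simp

lemma patCount_of_forall_not {n : ℕ} {p : (Fin n → Bool) → Prop} (h : ∀ s, ¬ p s) :
    patCount n p = 0 :=
  have : IsEmpty {s // p s} := ⟨fun s => h s.1 s.2⟩
  Nat.card_of_isEmpty

lemma patCount_or {n : ℕ} {p q : (Fin n → Bool) → Prop} (h : ∀ s, p s → ¬ q s) :
    patCount n (fun s => p s ∨ q s) = patCount n p + patCount n q := by
  classical
  exact (Nat.card_congr (subtypeOrEquiv p q (Pi.disjoint_iff.2 fun s => by
    simpa [Prop.disjoint_iff] using h s))).trans Nat.card_sum

lemma patCount_succ {n : ℕ} (p : (Fin (n + 1) → Bool) → Prop) :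
    patCount (n + 1) p =
      patCount n (fun t => p (Fin.cons true t)) + patCount n (fun t => p (Fin.cons false t)) := by
  classical
  simp only [patCount, Nat.card_eq_fintype_card, Fintype.card_subtype, card_filter]
  rw [← (Fin.consEquiv fun _ => Bool).sum_comp, Fintype.sum_prod_type, Fintype.sum_bool]
  rfl

lemma patCount_card_eq (n c : ℕ) : patCount n (fun s => #{i | s i} = c) = n.choose c := by
  classical
  let e : (Fin n → Bool) ≃ Finset (Fin n) :=
    { toFun := fun s => {i | s i}
      invFun := fun A i => decide (i ∈ A)
      left_inv := fun s => by ext; simp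
      right_inv := fun A => by ext; simp }
  refine (Nat.card_congr (e.subtypeEquiv (q := fun A => #A = c) fun s => Iff.rfl)).trans ?_
  rw [Nat.card_eq_fintype_card, Fintype.card_finset_len, Fintype.card_fin]

def StaysNonneg (x : ℤ) {n : ℕ} (s : Fin n → Bool) : Prop :=
  ∀ k ≤ n, 0 ≤ x + patSum s k

lemma staysNonneg_cons {x : ℤ} {n : ℕ} (b : Bool) (t : Fin n → Bool) :
    StaysNonneg x (Fin.cons b t : Fin (n + 1) → Bool) ↔
      0 ≤ x ∧ StaysNonneg (x + if b then 1 else -1) t := by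
  simp only [StaysNonneg, ← Nat.lt_succ_iff, Nat.forall_lt_succ_left, patSum_cons, ← add_assoc]
  simp [patSum]

noncomputable def nonnegCount (x : ℤ) (n : ℕ) : ℕ :=
  patCount n (StaysNonneg x)

noncomputable def endCount (a b : ℤ) (n : ℕ) : ℕ :=
  patCount n (fun s => patSum s n ∈ Set.Icc a b)

lemma nonnegCount_neg_one (n : ℕ) : nonnegCount (-1) n = 0 :=
  patCount_of_forall_not fun s h => by simpa [patSum] using h 0 n.zero_le

lemma nonnegCount_succ {x : ℤ} (hx : 0 ≤ x) (n : ℕ) :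
    nonnegCount x (n + 1) = nonnegCount (x + 1) n + nonnegCount (x - 1) n := by
  simp only [nonnegCount, patCount_succ, staysNonneg_cons, hx, true_and]
  simp [sub_eq_add_neg]

lemma endCount_succ (a b : ℤ) (n : ℕ) :
    endCount a b (n + 1) = endCount (a - 1) (b - 1) n + endCount (a + 1) (b + 1) n := by
  rw [endCount, patCount_succ]
  congr 1 <;> refine patCount_congr fun t => ?_ <;>
    simp only [patSum_cons, Set.mem_Icc, if_true, if_false, Bool.false_eq_true] <;> omega

lemma endCount_split {a b c : ℤ} (hab : a ≤ b + 1) (hbc : b ≤ c) (n : ℕ) :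
    endCount a c n = endCount a b n + endCount (b + 1) c n := by
  rw [endCount, endCount, endCount, ← patCount_or fun s h h' => by
    simp only [Set.mem_Icc] at h h'; omega]
  exact patCount_congr fun s => by simp only [Set.mem_Icc]; omega

lemma endCount_of_lt {a b : ℤ} (h : b < a) (n : ℕ) : endCount a b n = 0 :=
  patCount_of_forall_not fun s hs => by simp only [Set.mem_Icc] at hs; omega

lemma nonnegCount_eq_endCount (n : ℕ) :
    ∀ x : ℤ, -1 ≤ x → nonnegCount x n = endCount (-x) (x + 1) n := by
  induction n with
  | zero =>
    intro x hx
    rcases hx.eq_or_lt with rfl | hx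
    · rw [nonnegCount_neg_one, endCount_of_lt (by norm_num)]
    · rw [nonnegCount, endCount, patCount_of_forall, patCount_of_forall]
      · intro s
        simp only [patSum, range_zero, sum_empty, Set.mem_Icc]
        omega
      · intro s k hk
        simp only [patSum, Nat.le_zero.1 hk, range_zero, sum_empty, add_zero]
        omega
  | succ n ih =>
    intro x hx
    rcases hx.eq_or_lt with rfl | hx
    · rw [nonnegCount_neg_one, endCount_of_lt (by norm_num)]
    · rw [nonnegCount_succ (by omega), ih _ (by omega), ih _ (by omega), endCount_succ]
      have h1 := endCount_split (a := -(x + 1)) (b := -x) (c := x + 1 + 1) (by omega) (by omega) n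
      have h2 := endCount_split (a := -x - 1) (b := -x) (c := x + 1 - 1) (by omega) (by omega) n
      have h3 := endCount_split (a := -x + 1) (b := x) (c := x + 1 + 1) (by omega) (by omega) n
      ring_nf at h1 h2 h3 ⊢
      omega

lemma nonnegCount_zero (n : ℕ) : nonnegCount 0 n = n.choose ((n + 1) / 2) := by
  rw [nonnegCount_eq_endCount n 0 (by norm_num), ← patCount_card_eq]
  exact patCount_congr fun s => by rw [patSum_eq_two_mul_card_sub, Set.mem_Icc]; omega

lemma nonnegCount_one (n : ℕ) : nonnegCount 1 n = (n + 1).choose ((n + 2) / 2) := by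
  rw [← nonnegCount_zero, nonnegCount_succ le_rfl, zero_sub, nonnegCount_neg_one, zero_add,
    add_zero]

lemma choose_add_two_mul_succ (n : ℕ) :
    (n + 2).choose ((n + 1) / 2 + 1) * ((n + 1) / 2 + 1) =
      2 * (2 * ((n + 1) / 2) + 1) * n.choose ((n + 1) / 2) := by
  set c := (n + 1) / 2
  have hpar : (n + 2) * (n + 1) = 2 * (2 * c + 1) * (n + 1 - c) := by
    rcases Nat.even_or_odd' n with ⟨j, rfl | rfl⟩
    · rw [show c = j by omega, show 2 * j + 1 - j = j + 1 by omega]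
      ring
    · rw [show c = j + 1 by omega, show 2 * j + 1 + 1 - (j + 1) = j + 1 by omega]
      ring
  refine Nat.eq_of_mul_eq_mul_right (show 0 < n + 1 - c by omega) ?_
  calc (n + 2).choose (c + 1) * (c + 1) * (n + 1 - c)
      = (n + 2) * ((n + 1).choose c * (n + 1 - c)) := by
        rw [← Nat.add_one_mul_choose_eq]
        ring
    _ = (n + 2) * (n + 1) * n.choose c := by
        rw [← Nat.choose_mul_succ_eq]
        ring
    _ = _ := by
        rw [hpar]
        ring

lemma tendsto_div_two_mul_add_one :
    Tendsto (fun c : ℕ => (c : ℝ≥0∞) / (2 * c + 1)) atTop (𝓝 2⁻¹) := by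
  have h : Tendsto (fun c : ℕ => (2 + (c : ℝ≥0∞)⁻¹)⁻¹) atTop (𝓝 2⁻¹) := by
    simpa using tendsto_inv_iff.2 (tendsto_const_nhds.add ENNReal.tendsto_inv_nat_nhds_zero)
  refine h.congr' ((eventually_ne_atTop 0).mono fun c hc => ?_)
  have hc' : (c : ℝ≥0∞) ≠ 0 := by exact_mod_cast hc
  dsimp only
  rw [← ENNReal.inv_div (Or.inl (ENNReal.natCast_ne_top c)) (Or.inl hc'), ENNReal.add_div,
    ENNReal.mul_div_cancel_right hc' (ENNReal.natCast_ne_top c), one_div]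

lemma _root_.ENNReal.inv_div_mul_sub_div {u v q : ℝ≥0∞} (hq0 : q ≠ 0) (hq : q ≠ ⊤) :
    (u / q)⁻¹ * (u / q - v / q) = (u - v) / u := by
  rw [← ENNReal.div_eq_inv_mul, ← ENNReal.sub_div fun _ _ => hq0, div_eq_mul_inv (u - v),
    div_eq_mul_inv u,
    ENNReal.mul_div_mul_right _ _ (ENNReal.inv_ne_zero.2 hq) (ENNReal.inv_ne_top.2 hq0)]

lemma natCast_sub_two_mul_div_eq {u a c : ℕ} (h : u * (c + 1) = 2 * (2 * c + 1) * a)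
    (hu : u ≠ 0) :
    ((u : ℝ≥0∞) - (2 * a : ℕ)) / u = c / (2 * c + 1) := by
  have hle : 2 * a ≤ u := by nlinarith
  have h' : (u : ℤ) * (c + 1) = 2 * (2 * c + 1) * a := by exact_mod_cast h
  have key : (2 * c + 1) * (u - 2 * a) = u * c := by
    zify [hle]
    linear_combination h'
  rw [← ENNReal.natCast_sub, ENNReal.div_eq_div_iff (by positivity)
    (by exact_mod_cast ENNReal.natCast_ne_top (2 * c + 1)) (by exact_mod_cast hu)
    (ENNReal.natCast_ne_top u)]
  exact_mod_cast key

lemma lt_hitTime_iff {Ω : Type*} {Y : ℕ → Ω → ℤ} {l : ℤ} {ω : Ω} {m : ℕ} :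
    (m : ℕ∞) < hitTime Y l ω ↔ ∀ k ≤ m, Y k ω ≠ l := by
  rw [← ENat.add_one_le_iff (ENat.natCast_ne_top m), hitTime, le_sInf_iff, Set.forall_mem_image]
  refine forall_congr' fun k => ?_
  simp only [Set.mem_ofPred_eq]
  norm_cast
  omega

lemma hitTime_lt_iff {Ω : Type*} {Y : ℕ → Ω → ℤ} {l : ℤ} {ω : Ω} {m : ℕ} :
    hitTime Y l ω < m ↔ ∃ k < m, Y k ω = l := by
  rw [hitTime, sInf_lt_iff, Set.exists_mem_image]
  simp only [Set.mem_ofPred_eq, Nat.cast_lt]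
  exact exists_congr fun k => and_comm

lemma measurableSet_lt_hitTime {Ω : Type*} [MeasurableSpace Ω] {Y : ℕ → Ω → ℤ}
    (hY : ∀ k, Measurable (Y k)) (l : ℤ) (m : ℕ) :
    MeasurableSet {ω | (m : ℕ∞) < hitTime Y l ω} := by
  simp only [lt_hitTime_iff, Set.ofPred_forall]
  exact .iInter fun k => .iInter fun _ => (measurableSet_singleton l).compl.preimage (hY k)

lemma measurableSet_hitTime_lt {Ω : Type*} [MeasurableSpace Ω] {Y : ℕ → Ω → ℤ}
    (hY : ∀ k, Measurable (Y k)) (l : ℤ) (m : ℕ) :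
    MeasurableSet {ω | hitTime Y l ω < m} := by
  simp only [hitTime_lt_iff, Set.ofPred_exists]
  exact .iUnion fun k => (MeasurableSet.const (k < m)).inter
    ((measurableSet_singleton l).preimage (hY k))

lemma forall_lt_of_forall_ne {f : ℕ → ℤ} (hf : ∀ k, f k - 1 ≤ f (k + 1)) {l : ℤ} (h0 : l < f 0)
    {m : ℕ} (h : ∀ k ≤ m, f k ≠ l) : ∀ k ≤ m, l < f k := by
  intro k hk
  induction k with
  | zero => exact h0
  | succ k ih =>
    have hlt := ih (by omega)
    have hne := h (k + 1) hk
    have hstep := hf k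
    omega

lemma ae_stepLaw (p : ℝ) : ∀ᵐ z ∂stepLaw p, z = -1 ∨ z = 1 := by
  simp only [stepLaw, ae_add_measure_iff]
  exact ⟨Measure.ae_smul_measure (by simp [ae_dirac_eq]) _,
    Measure.ae_smul_measure (by simp [ae_dirac_eq]) _⟩

lemma stepLaw_half_singleton {z : ℤ} (hz : z = -1 ∨ z = 1) : stepLaw (1 / 2) {z} = 2⁻¹ := by
  rcases hz with rfl | rfl <;> norm_num [stepLaw, ENNReal.ofReal_div_of_pos]

section Walk

variable {Ω : Type*} {X : ℕ → Ω → ℤ}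

/-- Determines the first `m` steps at `ω` when these are `±1`. -/
def patternOf (X : ℕ → Ω → ℤ) (m : ℕ) (ω : Ω) : Fin m → Bool :=
  fun i => X i ω = 1

def cylinder (X : ℕ → Ω → ℤ) {m : ℕ} (s : Fin m → Bool) : Set Ω :=
  ⋂ i ∈ range m, X i ⁻¹' {patStep s i}

lemma patStep_patternOf {ω : Ω} (hω : ∀ i, X i ω = -1 ∨ X i ω = 1) {m i : ℕ} (hi : i < m) :
    patStep (patternOf X m ω) i = X i ω := by
  rcases hω i with h | h <;> simp [patStep, patternOf, hi, h]

lemma mem_cylinder_iff {ω : Ω} (hω : ∀ i, X i ω = -1 ∨ X i ω = 1) {m : ℕ} (s : Fin m → Bool) :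
    ω ∈ cylinder X s ↔ patternOf X m ω = s := by
  rw [← forall_patStep_eq_iff]
  simp only [cylinder, Set.mem_iInter, mem_range, Set.mem_preimage, Set.mem_singleton_iff]
  exact forall₂_congr fun i hi => by rw [patStep_patternOf hω hi]

lemma pairwise_disjoint_cylinder {m : ℕ} :
    Pairwise fun s t : Fin m → Bool => Disjoint (cylinder X s) (cylinder X t) := by
  intro s t hst
  refine Set.disjoint_left.2 fun ω hs ht => hst (forall_patStep_eq_iff.1 fun i hi => ?_)
  simp only [cylinder, Set.mem_iInter, mem_range, Set.mem_preimage, Set.mem_singleton_iff] at hs ht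
  rw [← hs i hi, ht i hi]

lemma walkFrom_zero (x : ℤ) (ω : Ω) : walkFrom x X 0 ω = x := by
  simp [walkFrom]

lemma walkFrom_succ (x : ℤ) (k : ℕ) (ω : Ω) :
    walkFrom x X (k + 1) ω = walkFrom x X k ω + X k ω := by
  simp only [walkFrom, sum_range_succ, add_assoc]

lemma walkFrom_eq_add_patSum {ω : Ω} (hω : ∀ i, X i ω = -1 ∨ X i ω = 1) (x : ℤ) {m k : ℕ}
    (hk : k ≤ m) : walkFrom x X k ω = x + patSum (patternOf X m ω) k := by
  rw [walkFrom, patSum]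
  congr 1
  exact sum_congr rfl fun i hi => (patStep_patternOf hω ((mem_range.1 hi).trans_le hk)).symm

lemma forall_walkFrom_ne_iff {ω : Ω} (hω : ∀ i, X i ω = -1 ∨ X i ω = 1) {x l : ℤ} (hl : l < x)
    (m : ℕ) : (∀ k ≤ m, walkFrom x X k ω ≠ l) ↔ ∀ k ≤ m, l < walkFrom x X k ω := by
  refine ⟨forall_lt_of_forall_ne (fun k => ?_) (by rwa [walkFrom_zero]), fun h k hk => (h k hk).ne'⟩
  rw [walkFrom_succ]
  rcases hω k with h | h <;> omega

lemma lt_hitTime_zero_iff_staysNonneg {ω : Ω} (hω : ∀ i, X i ω = -1 ∨ X i ω = 1) (m : ℕ) :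
    (m : ℕ∞) < hitTime (walkFrom 2 X) 0 ω ↔ StaysNonneg 1 (patternOf X m ω) := by
  rw [lt_hitTime_iff, forall_walkFrom_ne_iff hω two_pos]
  exact forall₂_congr fun k hk => by rw [walkFrom_eq_add_patSum hω 2 hk]; omega

lemma not_hitTime_one_lt_iff_staysNonneg {ω : Ω} (hω : ∀ i, X i ω = -1 ∨ X i ω = 1) (n : ℕ) :
    ¬ hitTime (walkFrom 2 X) 1 ω < (n + 1 : ℕ) ↔ StaysNonneg 0 (patternOf X n ω) := by
  simp only [hitTime_lt_iff, not_exists, not_and, Nat.lt_succ_iff, ← ne_eq]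
  rw [forall_walkFrom_ne_iff hω one_lt_two]
  exact forall₂_congr fun k hk => by rw [walkFrom_eq_add_patSum hω 2 hk]; omega

lemma lt_hitTime_zero_of_not_hitTime_one_lt {ω : Ω} (hω : ∀ i, X i ω = -1 ∨ X i ω = 1) {n : ℕ}
    (h : ¬ hitTime (walkFrom 2 X) 1 ω < (n + 1 : ℕ)) :
    ((n + 1 : ℕ) : ℕ∞) < hitTime (walkFrom 2 X) 0 ω := by
  simp only [hitTime_lt_iff, not_exists, not_and, Nat.lt_succ_iff, ← ne_eq] at h
  have h1 := (forall_walkFrom_ne_iff hω one_lt_two n).1 h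
  refine lt_hitTime_iff.2 fun k hk => ?_
  rcases hk.lt_or_eq with hk | rfl
  · exact (zero_lt_one.trans (h1 k (by omega))).ne'
  · rw [walkFrom_succ]
    rcases hω n with h | h <;> linarith [h1 n le_rfl]

variable [MeasurableSpace Ω] {P : Measure Ω}

lemma measurable_walkFrom (hXmeas : ∀ i, Measurable (X i)) (x : ℤ) (k : ℕ) :
    Measurable (walkFrom x X k) :=
  (measurable_sum _ fun i _ => hXmeas i).const_add x

lemma measurableSet_cylinder (hXmeas : ∀ i, Measurable (X i)) {m : ℕ} (s : Fin m → Bool) :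
    MeasurableSet (cylinder X s) :=
  .biInter (Set.to_countable _) fun i _ => hXmeas i (measurableSet_singleton _)

lemma ae_forall_eq_neg_one_or_eq_one (hXmeas : ∀ i, Measurable (X i))
    (hXdist : ∀ i, Measure.map (X i) P = stepLaw (1 / 2)) :
    ∀ᵐ ω ∂P, ∀ i, X i ω = -1 ∨ X i ω = 1 :=
  ae_all_iff.2 fun i => ae_of_ae_map (hXmeas i).aemeasurable (hXdist i ▸ ae_stepLaw _)

lemma compl_hitTime_one_lt_ae_le (hXmeas : ∀ i, Measurable (X i))
    (hXdist : ∀ i, Measure.map (X i) P = stepLaw (1 / 2)) (n : ℕ) :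
    {ω | hitTime (walkFrom 2 X) 1 ω < (n + 1 : ℕ)}ᶜ ≤ᵐ[P]
      {ω | ((n + 1 : ℕ) : ℕ∞) < hitTime (walkFrom 2 X) 0 ω} :=
  (ae_forall_eq_neg_one_or_eq_one hXmeas hXdist).mono fun _ hω =>
    lt_hitTime_zero_of_not_hitTime_one_lt hω

section Steps

variable (hXmeas : ∀ i, Measurable (X i)) (hXdist : ∀ i, Measure.map (X i) P = stepLaw (1 / 2))
  (hXindep : iIndepFun X P)
include hXmeas hXdist hXindep

lemma measure_cylinder {m : ℕ} (s : Fin m → Bool) : P (cylinder X s) = (2 ^ m)⁻¹ := by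
  rw [cylinder, hXindep.measure_inter_preimage_eq_mul _ fun _ _ => measurableSet_singleton _,
    prod_congr rfl fun i hi => ?_, prod_const, card_range, ENNReal.inv_pow]
  rw [← Measure.map_apply (hXmeas i) (measurableSet_singleton _), hXdist, stepLaw_half_singleton]
  unfold patStep
  rw [dif_pos (mem_range.1 hi)]
  split_ifs <;> simp

lemma measure_eq_patCount_div {m : ℕ} (p : (Fin m → Bool) → Prop) {T : Set Ω}
    (hT : ∀ ω, (∀ i, X i ω = -1 ∨ X i ω = 1) → (ω ∈ T ↔ p (patternOf X m ω))) :
    P T = patCount m p / 2 ^ m := by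
  classical
  have hae : T =ᵐ[P] ⋃ s : {s // p s}, cylinder X s.1 := by
    filter_upwards [ae_forall_eq_neg_one_or_eq_one hXmeas hXdist] with ω hω
    change (ω ∈ T) = (ω ∈ ⋃ s : {s // p s}, cylinder X s.1)
    simp only [Set.mem_iUnion, mem_cylinder_iff hω, hT ω hω, eq_iff_iff]
    exact ⟨fun h => ⟨⟨_, h⟩, rfl⟩, fun ⟨s, hs⟩ => hs ▸ s.2⟩
  rw [measure_congr hae, measure_iUnion (fun s t hst => pairwise_disjoint_cylinder
    (Subtype.coe_injective.ne hst)) fun s => measurableSet_cylinder hXmeas s.1, tsum_fintype]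
  simp only [measure_cylinder hXmeas hXdist hXindep, sum_const, card_univ, nsmul_eq_mul,
    patCount, Nat.card_eq_fintype_card, div_eq_mul_inv]

lemma measure_lt_hitTime_zero (m : ℕ) :
    P {ω | (m : ℕ∞) < hitTime (walkFrom 2 X) 0 ω} = (m + 1).choose ((m + 2) / 2) / 2 ^ m := by
  rw [measure_eq_patCount_div hXmeas hXdist hXindep (T := {ω | (m : ℕ∞) < hitTime _ 0 ω}) _
    fun ω hω => lt_hitTime_zero_iff_staysNonneg hω m]
  exact congrArg (fun c : ℕ => (c : ℝ≥0∞) / 2 ^ m) (nonnegCount_one m)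

lemma measure_compl_hitTime_one_lt (n : ℕ) :
    P {ω | hitTime (walkFrom 2 X) 1 ω < (n + 1 : ℕ)}ᶜ = n.choose ((n + 1) / 2) / 2 ^ n := by
  rw [measure_eq_patCount_div hXmeas hXdist hXindep
    (T := {ω | hitTime (walkFrom 2 X) 1 ω < (n + 1 : ℕ)}ᶜ) _
    fun ω hω => not_hitTime_one_lt_iff_staysNonneg hω n]
  exact congrArg (fun c : ℕ => (c : ℝ≥0∞) / 2 ^ n) (nonnegCount_zero n)

lemma cond_hitTime_one_lt_eq [IsProbabilityMeasure P] (n : ℕ) :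
    P[{ω | hitTime (walkFrom 2 X) 1 ω < (n + 1 : ℕ)} |
        {ω | ((n + 1 : ℕ) : ℕ∞) < hitTime (walkFrom 2 X) 0 ω}] =
      ((n + 1) / 2 : ℕ) / (2 * ((n + 1) / 2 : ℕ) + 1) := by
  set A := {ω | ((n + 1 : ℕ) : ℕ∞) < hitTime (walkFrom 2 X) 0 ω}
  set B := {ω | hitTime (walkFrom 2 X) 1 ω < (n + 1 : ℕ)}
  have hY := measurable_walkFrom hXmeas 2
  have hAB : P (A ∪ Bᶜ) = P A :=
    measure_congr (union_ae_eq_left_iff_ae_subset.2 (compl_hitTime_one_lt_ae_le hXmeas hXdist n))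
  rw [cond_apply (measurableSet_lt_hitTime hY 0 (n + 1)), ← Set.sdiff_compl,
    measure_sdiff' _ (measurableSet_hitTime_lt hY 1 (n + 1)).compl.nullMeasurableSet
      (measure_ne_top _ _), hAB,
    measure_lt_hitTime_zero hXmeas hXdist hXindep,
    measure_compl_hitTime_one_lt hXmeas hXdist hXindep,
    ← ENNReal.mul_div_mul_left _ (2 ^ n) two_ne_zero ENNReal.ofNat_ne_top, ← pow_succ',
    ENNReal.inv_div_mul_sub_div (by positivity) (by simp)]
  rw [show (n + 1 + 2) / 2 = (n + 1) / 2 + 1 by omega]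
  exact_mod_cast natCast_sub_two_mul_div_eq (choose_add_two_mul_succ n)
    (Nat.choose_pos (by omega)).ne'

end Steps

end Walk

/-- For the symmetric simple random walk started at `Y₀ = 2`, with
`V_k` the first hitting time of level `k`, the conditional probability
`P₂(V₁ < m | V₀ > m)` converges to `1/2` as `m → ∞`. -/
theorem cond_hitting_prob_symmetric
    {Ωp : Type*} [MeasurableSpace Ωp] (P : Measure Ωp) [IsProbabilityMeasure P]
    (X : ℕ → Ωp → ℤ) (hXmeas : ∀ i, Measurable (X i))
    (hXdist : ∀ i, Measure.map (X i) P = stepLaw (1 / 2))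
    (hXindep : iIndepFun X P) :
    Tendsto
      (fun m : ℕ =>
        ProbabilityTheory.cond P {ω | (m : ℕ∞) < hitTime (walkFrom 2 X) 0 ω}
          {ω | hitTime (walkFrom 2 X) 1 ω < (m : ℕ∞)})
      atTop (𝓝 (1 / 2 : ENNReal)) := by
  refine (tendsto_add_atTop_iff_nat 1).1 ?_
  simp only [cond_hitTime_one_lt_eq hXmeas hXdist hXindep, one_div]
  exact tendsto_div_two_mul_add_one.comp
    (tendsto_atTop_atTop.2 fun c => ⟨2 * c, fun n hn => by omega⟩)

end TASEP
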